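/- arXiv:1607.00264 — 2 statements merged into one kernel-verified Lean document; each statement's English description precedes it below -/
import Mathlib

section
/- The map v_α sending a nonzero polynomial f ∈ K[x₁,…,xₙ] to its Lazard valuation at α ∈ Kⁿ is a valuation: for all nonzero f, g, one has v_α(fg) = v_α(f) + v_α(g) (componentwise addition in ℕⁿ), and if f + g ≠ 0 then v_α(f+g) ≥_lex min(v_α(f), v_α(g)). -/
open MvPolynomial

/-- The Lazard valuation of a polynomial `f` at a point `α`: the lexicographically
least exponent vector occurring in the expansion of `f` about `α`
(i.e. in the support of `f(x + α)`), as an element of `Lex (Fin n →₀ ℕ)`. -/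
noncomputable def lazardVal {K : Type*} [CommRing K] {n : ℕ}
    (α : Fin n → K) (f : MvPolynomial (Fin n) K) : Lex (Fin n →₀ ℕ) :=
  WithTop.untopD (toLex 0) (((MvPolynomial.bind₁ (fun i => X i + C (α i)) f).support.image toLex).min)

/-!
Expanding about `α` is the substitution `xᵢ ↦ xᵢ + αᵢ`, an injective ring endomorphism, and the
lexicographically least exponent of a polynomial is the `lexOrder` of the polynomial viewed as a
power series. So `v_α` is `lexOrder` composed with an injective ring map, and `lexOrder` is
additive on products (the lowest terms cannot cancel: `u + v = a + b` with `a ≤ u`, `b ≤ v`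
forces `u = a`, `v = b`) and satisfies the ultrametric inequality on sums.
-/

namespace MvPolynomial

theorem bind₁_X_add_C_injective {σ R : Type*} [CommRing R] (a : σ → R) :
    Function.Injective (bind₁ fun i => X i + C (a i) : MvPolynomial σ R →ₐ[R] _) :=
  Function.LeftInverse.injective (g := bind₁ fun i => X i - C (a i)) fun p => by
    rw [bind₁_bind₁]
    simp

theorem lexOrder_coe {σ R : Type*} [LinearOrder σ] [WellFoundedGT σ] [CommSemiring R]
    (p : MvPolynomial σ R) :
    MvPowerSeries.lexOrder (p : MvPowerSeries σ R) = (p.support.image toLex).min := by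
  refine le_antisymm (Finset.le_min fun d hd => ?_) (MvPowerSeries.le_lexOrder_iff.2 fun d hd => ?_)
  · obtain ⟨c, hc, rfl⟩ := Finset.mem_image.1 hd
    exact MvPowerSeries.lexOrder_le_of_coeff_ne_zero (by rwa [coeff_coe, ← mem_support_iff])
  · rw [coeff_coe, ← notMem_support_iff]
    exact fun hmem => (Finset.min_le (Finset.mem_image_of_mem toLex hmem)).not_gt hd

end MvPolynomial

theorem coe_lazardVal {K : Type*} [CommRing K] {n : ℕ} (α : Fin n → K)
    {f : MvPolynomial (Fin n) K} (hf : f ≠ 0) :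
    (lazardVal α f : WithTop (Lex (Fin n →₀ ℕ))) =
      MvPowerSeries.lexOrder (bind₁ (fun i => X i + C (α i)) f : MvPowerSeries (Fin n) K) := by
  have hT : (bind₁ (fun i => X i + C (α i)) f : MvPowerSeries (Fin n) K) ≠ 0 := by
    rw [Ne, MvPolynomial.coe_eq_zero_iff]
    exact (map_ne_zero_iff _ (bind₁_X_add_C_injective α)).2 hf
  obtain ⟨d, hd⟩ := MvPowerSeries.exists_finsupp_eq_lexOrder_of_ne_zero hT
  rw [lazardVal, ← lexOrder_coe, hd, WithTop.untopD_coe]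

/-- The map `f ↦ v_α(f)` is a valuation: it is multiplicative, and the valuation of a
sum (when nonzero) is at least the lexicographic minimum of the two valuations. -/
theorem lazardVal_is_valuation {K : Type*} [Field K] {n : ℕ}
    (α : Fin n → K) (f g : MvPolynomial (Fin n) K) (hf : f ≠ 0) (hg : g ≠ 0) :
    lazardVal α (f * g) = lazardVal α f + lazardVal α g ∧
    (f + g ≠ 0 → min (lazardVal α f) (lazardVal α g) ≤ lazardVal α (f + g)) := by
  refine ⟨WithTop.coe_injective ?_, fun hfg => ?_⟩
  · rw [WithTop.coe_add, coe_lazardVal α (mul_ne_zero hf hg), coe_lazardVal α hf,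
      coe_lazardVal α hg, map_mul, MvPolynomial.coe_mul, MvPowerSeries.lexOrder_mul]
  · rw [← WithTop.coe_le_coe, WithTop.coe_min, coe_lazardVal α hf, coe_lazardVal α hg,
      coe_lazardVal α hfg, map_add, MvPolynomial.coe_add]
    exact MvPowerSeries.min_lexOrder_le
end

section
/- Let f ∈ K[x₁,…,xₙ] be nonzero (K a field), α ∈ K^{n−1}, and let v = (v₁,…,v_{n−1}) be the lexicographically least element of {u ∈ ℕ^{n−1} : f^u ≠ 0}, where f(x₁,…,xₙ) = Σ_u f^u(xₙ)·Π_{i=1}^{n−1}(x_i−α_i)^{u_i}. Then the Lazard evaluation f_α(xₙ) of f at α equals f^v(xₙ). -/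
/-!
Viewing `f` as a polynomial in `x₀` over `K[x₁,…,xₙ]`, its Taylor expansion at `α₀` is
`f = Σ_k c_k (x₀ - α₀)^k`, and the multiplicity `r` of the root `α₀` is the least `k` with
`c_k ≠ 0`; dividing by `(x₀ - α₀)^r` and substituting `x₀ = α₀` leaves exactly `c_r`, so
the first Lazard step returns `c_r`. On the other hand `f^u` is the expansion coefficient of
`c_{u₀}` at the tail of `α`, indexed by the tail of `u`. Hence the lexicographically least `u`
with `f^u ≠ 0` starts with `r` and continues with the least index for `c_r`, and induction on
the number of variables concludes.
-/

open MvPolynomial Polynomial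

/-- One step of the Lazard evaluation process: view `f` as a polynomial in the first
variable, divide out the highest power of `(x₀ - a)` dividing it, then substitute
`x₀ = a`. -/
noncomputable def lazardStep {K : Type*} [Field K] {n : ℕ} (a : K)
    (f : MvPolynomial (Fin (n + 1)) K) : MvPolynomial (Fin n) K :=
  Polynomial.eval (MvPolynomial.C a)
    ((MvPolynomial.finSuccEquiv K n f) /ₘ
      ((Polynomial.X - Polynomial.C (MvPolynomial.C a)) ^
        ((MvPolynomial.finSuccEquiv K n f).rootMultiplicity (MvPolynomial.C a))))

/-- The Lazard evaluation `f_α(xₙ)` of `f ∈ K[x₀,…,xₙ]` at `α ∈ Kⁿ`. -/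
noncomputable def lazardEval {K : Type*} [Field K] :
    {n : ℕ} → MvPolynomial (Fin (n + 1)) K → (Fin n → K) → Polynomial K
  | 0, f, _ =>
      Polynomial.map (MvPolynomial.isEmptyRingEquiv K (Fin 0)).toRingHom
        (MvPolynomial.finSuccEquiv K 0 f)
  | _ + 1, f, α => lazardEval (lazardStep (α 0) f) (Fin.tail α)

/-- The shift of `f` by `α` in the first `n` variables: the polynomial
`g(x, xₙ) = f(x + α, xₙ)`, whose coefficients give the expansion
`f = Σ_u f^u(xₙ) Π (x_i - α_i)^{u_i}`. -/
noncomputable def partialShift {K : Type*} [CommRing K] {n : ℕ}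
    (f : MvPolynomial (Fin (n + 1)) K) (α : Fin n → K) : MvPolynomial (Fin (n + 1)) K :=
  MvPolynomial.bind₁
    (fun i : Fin (n + 1) =>
      if h : (i : ℕ) < n then X i + MvPolynomial.C (α ⟨i, h⟩) else X i) f

/-- The coefficient `f^u(xₙ) ∈ K[xₙ]` in the expansion
`f = Σ_u f^u(xₙ) Π_{i<n} (x_i - α_i)^{u_i}`. -/
noncomputable def expansionCoeff {K : Type*} [CommRing K] {n : ℕ}
    (f : MvPolynomial (Fin (n + 1)) K) (α : Fin n → K) (u : Fin n → ℕ) : Polynomial K :=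
  ∑ j ∈ Finset.range ((partialShift f α).totalDegree + 1),
    Polynomial.C
        (MvPolynomial.coeff (Finsupp.equivFunOnFinite.symm (Fin.snoc u j))
          (partialShift f α)) *
      Polynomial.X ^ j

namespace Polynomial

variable {R : Type*} [CommRing R] (p : R[X]) (a : R)

theorem taylor_eq_X_pow_rootMultiplicity_mul :
    taylor a p = X ^ p.rootMultiplicity a * taylor a (p /ₘ (X - C a) ^ p.rootMultiplicity a) := by
  conv_lhs => rw [← pow_mul_divByMonic_rootMultiplicity_eq p a]
  rw [taylor_mul, taylor_pow, map_sub, taylor_X, taylor_C, add_sub_cancel_right]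

theorem taylor_coeff_rootMultiplicity :
    (taylor a p).coeff (p.rootMultiplicity a) =
      (p /ₘ (X - C a) ^ p.rootMultiplicity a).eval a := by
  rw [taylor_eq_X_pow_rootMultiplicity_mul, coeff_X_pow_mul', if_pos le_rfl, Nat.sub_self,
    taylor_coeff_zero]

theorem taylor_coeff_eq_zero_of_lt_rootMultiplicity {k : ℕ} (hk : k < p.rootMultiplicity a) :
    (taylor a p).coeff k = 0 := by
  rw [taylor_eq_X_pow_rootMultiplicity_mul, coeff_X_pow_mul', if_neg (not_le.2 hk)]

end Polynomial

theorem Fin.toLex_cons_lt_cons_iff {α : Type*} [LT α] {m : ℕ} {a b : α} {x y : Fin m → α} :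
    toLex (Fin.cons a x : Fin (m + 1) → α) < toLex (Fin.cons b y) ↔
      a < b ∨ a = b ∧ toLex x < toLex y :=
  Fin.pi_lex_lt_cons_cons _

theorem IsLeast.head_eq_and_isLeast_tail {α : Type*} [LinearOrder α] {m : ℕ}
    {P : α → (Fin m → α) → Prop} {r : α} {v : Fin (m + 1) → α}
    (hv : IsLeast (toLex '' {u | P (u 0) (Fin.tail u)}) (toLex v))
    (hlt : ∀ k < r, ∀ w, ¬ P k w) (hr : ∃ w, P r w) :
    v 0 = r ∧ IsLeast (toLex '' {w | P r w}) (toLex (Fin.tail v)) := by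
  obtain ⟨⟨u, hu, huv⟩, hleast⟩ := hv
  obtain rfl := toLex.injective huv
  have hcons : ∀ w, P r w → ¬ toLex (Fin.cons r w : Fin (m + 1) → α) < toLex u :=
    fun w hw => not_lt_of_ge (hleast ⟨Fin.cons r w, by simpa using hw, rfl⟩)
  have hu0 : u 0 = r := by
    obtain ⟨w, hw⟩ := hr
    rcases lt_trichotomy (u 0) r with h | h | h
    · exact absurd hu (hlt _ h _)
    · exact h
    · refine absurd ?_ (hcons w hw)
      rw [← Fin.cons_self_tail u, Fin.toLex_cons_lt_cons_iff]
      exact Or.inl h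
  refine ⟨hu0, ⟨_, hu0 ▸ hu, rfl⟩, ?_⟩
  rintro _ ⟨w, hw, rfl⟩
  refine not_lt.1 fun h => hcons w hw ?_
  rw [← Fin.cons_self_tail u, Fin.toLex_cons_lt_cons_iff, hu0]
  exact Or.inr ⟨rfl, h⟩

section Expansion

variable {R : Type*} [CommRing R] {n : ℕ}

theorem coeff_expansionCoeff (f : MvPolynomial (Fin (n + 1)) R) (α : Fin n → R)
    (u : Fin n → ℕ) (j : ℕ) :
    (expansionCoeff f α u).coeff j =
      (partialShift f α).coeff (Finsupp.equivFunOnFinite.symm (Fin.snoc u j)) := by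
  simp_rw [expansionCoeff, finsetSum_coeff, coeff_C_mul_X_pow, Finset.sum_ite_eq]
  split_ifs with hj
  · rfl
  refine (coeff_eq_zero_of_totalDegree_lt ?_).symm
  calc (partialShift f α).totalDegree < j := by simpa [Nat.lt_succ_iff] using hj
    _ = Finsupp.equivFunOnFinite.symm (Fin.snoc u j) (Fin.last n) := by simp
    _ ≤ _ := Finsupp.le_degree _ _

theorem partialShift_eq_zero_iff (f : MvPolynomial (Fin (n + 1)) R) (α : Fin n → R) :
    partialShift f α = 0 ↔ f = 0 := by
  refine ⟨fun h => ?_, by rintro rfl; simp [partialShift]⟩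
  have hinv : bind₁ (fun i : Fin (n + 1) =>
      if h : (i : ℕ) < n then X i - MvPolynomial.C (α ⟨i, h⟩) else X i) (partialShift f α) =
        bind₁ X f := by
    rw [partialShift, bind₁_bind₁]
    congr 2 with i
    by_cases hi : (i : ℕ) < n <;> simp [hi]
  rwa [h, map_zero, bind₁_X_left, AlgHom.id_apply, eq_comm] at hinv

theorem exists_expansionCoeff_ne_zero_iff (f : MvPolynomial (Fin (n + 1)) R) (α : Fin n → R) :
    (∃ u, expansionCoeff f α u ≠ 0) ↔ f ≠ 0 := by
  rw [ne_eq, ← partialShift_eq_zero_iff f α, ← not_forall, not_iff_not, MvPolynomial.ext_iff]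
  simp_rw [Polynomial.ext_iff, coeff_expansionCoeff, Polynomial.coeff_zero,
    MvPolynomial.coeff_zero]
  refine ⟨fun h d => ?_, fun h u j => h _⟩
  simpa [Fin.snoc_init_self] using h (Fin.init d) (d (Fin.last n))

theorem coeff_finSuccEquiv_partialShift (f : MvPolynomial (Fin (n + 2)) R) (α : Fin (n + 1) → R)
    (k : ℕ) :
    (finSuccEquiv R (n + 1) (partialShift f α)).coeff k =
      partialShift ((taylor (MvPolynomial.C (α 0)) (finSuccEquiv R (n + 1) f)).coeff k)
        (Fin.tail α) := by
  set shift := bind₁ fun i : Fin (n + 1) =>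
    if h : (i : ℕ) < n then X i + MvPolynomial.C (Fin.tail α ⟨i, h⟩) else X i
  -- Shifting `x₀` by `α₀` is the Taylor shift in `x₀`; the other shifts act on coefficients.
  have key : (finSuccEquiv R (n + 1)).toRingHom.comp (bind₁ fun i : Fin (n + 2) =>
      if h : (i : ℕ) < n + 1 then X i + MvPolynomial.C (α ⟨i, h⟩) else X i).toRingHom =
      (mapRingHom shift.toRingHom).comp
        ((taylorAlgHom (R := MvPolynomial (Fin (n + 1)) R) (MvPolynomial.C (α 0))).toRingHom.comp
          (finSuccEquiv R (n + 1)).toRingHom) := by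
    refine MvPolynomial.ringHom_ext (fun r => by simp [shift, finSuccEquiv_apply])
      (Fin.cases ?_ fun i => ?_)
    · simp [shift, finSuccEquiv_apply]
    · by_cases hi : (i : ℕ) < n <;> simp [shift, hi, finSuccEquiv_apply, Fin.tail]
  exact (congrArg (Polynomial.coeff · k) (RingHom.congr_fun key f)).trans (coeff_map _ _)

theorem expansionCoeff_eq_expansionCoeff_taylor_coeff (f : MvPolynomial (Fin (n + 2)) R)
    (α : Fin (n + 1) → R) (u : Fin (n + 1) → ℕ) :
    expansionCoeff f α u =
      expansionCoeff ((taylor (MvPolynomial.C (α 0)) (finSuccEquiv R (n + 1) f)).coeff (u 0))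
        (Fin.tail α) (Fin.tail u) := by
  ext j
  have hexp : Finsupp.equivFunOnFinite.symm (Fin.snoc u j) =
      Finsupp.cons (u 0) (Finsupp.equivFunOnFinite.symm (Fin.snoc (Fin.tail u) j)) := by
    rw [Finsupp.cons, Finsupp.coe_equivFunOnFinite_symm, Fin.cons_snoc_eq_snoc_cons,
      Fin.cons_self_tail]
  rw [coeff_expansionCoeff, coeff_expansionCoeff, hexp, ← finSuccEquiv_coeff_coeff,
    coeff_finSuccEquiv_partialShift]

theorem expansionCoeff_of_fin_zero (f : MvPolynomial (Fin 1) R) (α : Fin 0 → R)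
    (u : Fin 0 → ℕ) :
    expansionCoeff f α u = (finSuccEquiv R 0 f).map (isEmptyRingEquiv R (Fin 0)).toRingHom := by
  ext j
  have hexp : Finsupp.equivFunOnFinite.symm (Fin.snoc u j) = Finsupp.cons j 0 := by
    ext i; fin_cases i; rfl
  have hshift : partialShift f α = f := by
    conv_rhs => rw [← AlgHom.id_apply (R := R) f, ← bind₁_X_left]
    simp [partialShift]
  rw [coeff_expansionCoeff, Polynomial.coeff_map, RingEquiv.toRingHom_eq_coe, RingHom.coe_coe,
    isEmptyRingEquiv_eq_coeff_zero, finSuccEquiv_coeff_coeff, hshift, hexp]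

end Expansion

section Lazard

variable {K : Type*} [Field K] {n : ℕ}

theorem lazardStep_eq_taylor_coeff_rootMultiplicity (a : K) (f : MvPolynomial (Fin (n + 1)) K) :
    lazardStep a f = (taylor (MvPolynomial.C a) (finSuccEquiv K n f)).coeff
      ((finSuccEquiv K n f).rootMultiplicity (MvPolynomial.C a)) :=
  (taylor_coeff_rootMultiplicity _ _).symm

theorem lazardStep_ne_zero (a : K) {f : MvPolynomial (Fin (n + 1)) K} (hf : f ≠ 0) :
    lazardStep a f ≠ 0 :=
  eval_divByMonic_pow_rootMultiplicity_ne_zero _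
    ((map_ne_zero_iff _ (finSuccEquiv K n).injective).2 hf)

end Lazard

/-- Let `f ∈ K[x₀,…,xₙ]` be nonzero, `α ∈ Kⁿ`, and let `v` be the lexicographically
least element of `{u ∈ ℕⁿ : f^u ≠ 0}`, where `f = Σ_u f^u(xₙ) Π (x_i - α_i)^{u_i}`.
Then the Lazard evaluation of `f` at `α` equals `f^v(xₙ)`. -/
theorem lazardEval_eq_expansionCoeff {K : Type*} [Field K] {n : ℕ}
    (f : MvPolynomial (Fin (n + 1)) K) (hf : f ≠ 0) (α : Fin n → K) (v : Fin n → ℕ)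
    (hv : IsLeast (toLex '' {u : Fin n → ℕ | expansionCoeff f α u ≠ 0}) (toLex v)) :
    lazardEval f α = expansionCoeff f α v := by
  induction n with
  | zero => rw [lazardEval, expansionCoeff_of_fin_zero]
  | succ n ih =>
    have hc := lazardStep_ne_zero (α 0) hf
    rw [lazardStep_eq_taylor_coeff_rootMultiplicity] at hc
    simp_rw [expansionCoeff_eq_expansionCoeff_taylor_coeff f α] at hv ⊢
    obtain ⟨hv0, htail⟩ := hv.head_eq_and_isLeast_tail
      (P := fun k w => expansionCoeff
        ((taylor (MvPolynomial.C (α 0)) (finSuccEquiv K (n + 1) f)).coeff k) (Fin.tail α) w ≠ 0)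
      (fun k hk w hw => (exists_expansionCoeff_ne_zero_iff _ _).1 ⟨w, hw⟩
        (taylor_coeff_eq_zero_of_lt_rootMultiplicity _ _ hk))
      ((exists_expansionCoeff_ne_zero_iff _ _).2 hc)
    rw [lazardEval, lazardStep_eq_taylor_coeff_rootMultiplicity, ih _ hc _ _ htail, hv0]
end
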